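/- arXiv:1207.0258 — 6 statements merged into one kernel-verified Lean document; each statement's English description precedes it below -/
import Mathlib

section
/- The Suwa–Todo flow v_{ij} = max(0, min(Δ_{ij}, w_i + w_j − Δ_{ij}, w_i, w_j)), where Δ_{ij} = S_i − S_{j−1} + w_1 with S_i = Σ_{k=1}^i w_k and S_0 = S_n, satisfies the probability conservation law Σ_{j=1}^n v_{ij} = w_i for every i. -/
/-!
Place the weights end to end on the line: `w j` occupies `[S (j-1), S (j-1) + w j]` (for `j = 1`
this is `[S n, S n + w 1]`, since `S 0 = S n`), and the shifted copy `[S i - w i, S i] + w 1` of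
the `i`-th interval has length `w i`. Unwinding `Δ i j`, the flow `v i j` is exactly the length of
the overlap of these two intervals, i.e. the increment across the `j`-th interval of the clamp
onto the shifted one. The intervals of `j = 2, …, n` tile `[w 1, S n]` and the one of `j = 1`
continues it to `S n + w 1`, so the row sum telescopes to the increment of the clamp across
`[w 1, S n + w 1]`, which contains the shifted interval; that increment is its length `w i`.
-/

open Finset

/-- Partial sums `S i = w 1 + ... + w i`, with the convention `S 0 = S n`. -/
noncomputable def stS (n : ℕ) (w : ℕ → ℝ) (i : ℕ) : ℝ :=
  if i = 0 then ∑ k ∈ Finset.Icc 1 n, w k else ∑ k ∈ Finset.Icc 1 i, w k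

/-- `Δ i j = S i - S (j-1) + w 1`. -/
noncomputable def stDelta (n : ℕ) (w : ℕ → ℝ) (i j : ℕ) : ℝ :=
  stS n w i - stS n w (j - 1) + w 1

/-- The Suwa–Todo flow
`v i j = max (0, min (Δ i j, w i + w j - Δ i j, w i, w j))`. -/
noncomputable def stFlow (n : ℕ) (w : ℕ → ℝ) (i j : ℕ) : ℝ :=
  max 0 (min (stDelta n w i j) (min (w i + w j - stDelta n w i j) (min (w i) (w j))))

section Clamp

variable {α : Type*} [AddCommGroup α] [LinearOrder α] [IsOrderedAddMonoid α] {a b c d : α}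

theorem min_sub_max_eq :
    min b d - max a c = min (b - c) (min (d - a) (min (b - a) (d - c))) := by
  rw [← min_sub_sub_right, ← min_sub_sub_left, ← min_sub_sub_left]
  ac_rfl

theorem min_max_sub_min_max (hab : a ≤ b) (hcd : c ≤ d) :
    min b (max a d) - min b (max a c) = max 0 (min b d - max a c) := by
  rcases le_total d a with hda | had
  · rw [max_eq_left hda, max_eq_left (hcd.trans hda), sub_self, max_eq_left]
    exact sub_nonpos.mpr ((min_le_right b d).trans hda)
  rcases le_total b c with hbc | hcb
  · rw [min_eq_left (hbc.trans (hcd.trans (le_max_right a d))),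
      min_eq_left (hbc.trans (le_max_right a c)), sub_self, max_eq_left]
    exact sub_nonpos.mpr ((min_le_left b d).trans (hbc.trans (le_max_right a c)))
  · rw [max_eq_right had, min_eq_right (max_le hab hcb), eq_comm, max_eq_right_iff, sub_nonneg]
    exact le_min (max_le hab hcb) (max_le had hcd)

end Clamp

section SuwaTodo

variable {n : ℕ} {w : ℕ → ℝ} {i j : ℕ} {x : ℝ}

theorem stS_zero : stS n w 0 = stS n w n := by
  simp [stS]

theorem stS_one : stS n w 1 = w 1 := by
  simp [stS]

theorem stS_add_one (hi : i ≠ 0) : stS n w (i + 1) = stS n w i + w (i + 1) := by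
  simp [stS, hi, sum_Icc_succ_top]

theorem self_le_stS (hw : ∀ k ∈ Icc 1 n, 0 ≤ w k) (hi : i ∈ Icc 1 n) : w i ≤ stS n w i := by
  rw [stS, if_neg (by grind)]
  exact single_le_sum (fun k hk => hw k (by grind)) (by grind)

theorem stS_le_stS (hw : ∀ k ∈ Icc 1 n, 0 ≤ w k) (hi : i ≠ 0) (hij : i ≤ j) (hj : j ≤ n) :
    stS n w i ≤ stS n w j := by
  rw [stS, stS, if_neg hi, if_neg (by omega)]
  exact sum_le_sum_of_subset_of_nonneg (Icc_subset_Icc_right hij)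
    fun k hk _ => hw k (by grind)

noncomputable def stClamp (n : ℕ) (w : ℕ → ℝ) (i : ℕ) (x : ℝ) : ℝ :=
  min (stS n w i + w 1) (max (stS n w i + w 1 - w i) x)

theorem stClamp_of_le (h : x ≤ stS n w i + w 1 - w i) (hi : 0 ≤ w i) :
    stClamp n w i x = stS n w i + w 1 - w i := by
  rw [stClamp, max_eq_left h, min_eq_right (by linarith)]

theorem stClamp_of_ge (h : stS n w i + w 1 ≤ x) : stClamp n w i x = stS n w i + w 1 :=
  min_eq_left (le_max_of_le_right h)

theorem stFlow_eq_stClamp_sub (hi : 0 ≤ w i) (hj : 0 ≤ w j) :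
    stFlow n w i j =
      stClamp n w i (stS n w (j - 1) + w j) - stClamp n w i (stS n w (j - 1)) := by
  rw [stClamp, stClamp, min_max_sub_min_max (by linarith) (by linarith), min_sub_max_eq, stFlow,
    stDelta]
  ring_nf

end SuwaTodo

theorem suwa_todo_row_sums_general (n : ℕ) (w : ℕ → ℝ)
    (hw : ∀ k ∈ Finset.Icc 1 n, 0 < w k) :
    ∀ i ∈ Finset.Icc 1 n, ∑ j ∈ Finset.Icc 1 n, stFlow n w i j = w i := by
  intro i hi
  have hw0 : ∀ k ∈ Icc 1 n, 0 ≤ w k := fun k hk => (hw k hk).le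
  have hn : 1 ≤ n := by grind
  set C : ℕ → ℝ := fun j => stClamp n w i (stS n w j)
  have flow_one : stFlow n w i 1 = stClamp n w i (stS n w n + w 1) - C n := by
    rw [stFlow_eq_stClamp_sub (hw0 i hi) (hw0 1 (by grind)), Nat.sub_self, stS_zero]
  have flow_succ : ∀ j ∈ Ico 1 n, stFlow n w i (j + 1) = C (j + 1) - C j := by
    intro j hj
    rw [stFlow_eq_stClamp_sub (hw0 i hi) (hw0 _ (by grind)), Nat.add_sub_cancel,
      ← stS_add_one (i := j) (by grind)]
  have clamp_top : stClamp n w i (stS n w n + w 1) = stS n w i + w 1 :=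
    stClamp_of_ge (by linarith [stS_le_stS hw0 (by grind) (mem_Icc.mp hi).2 le_rfl])
  have clamp_bot : C 1 = stS n w i + w 1 - w i :=
    stClamp_of_le (by linarith [stS_one (n := n) (w := w), self_le_stS hw0 hi]) (hw0 i hi)
  rw [← Ico_add_one_right_eq_Icc, sum_eq_sum_Ico_succ_bot (by omega), ← sum_Ico_add',
    sum_congr rfl flow_succ, sum_Ico_sub C hn, flow_one, clamp_top, clamp_bot]
  ring

/-- The Suwa–Todo flow satisfies the probability conservation law (row sums). -/
theorem suwa_todo_row_sums (n : ℕ) (hn : 2 ≤ n) (w : ℕ → ℝ)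
    (hw : ∀ k ∈ Finset.Icc 1 n, 0 < w k)
    (hmax : ∀ k ∈ Finset.Icc 1 n, w k ≤ w 1) :
    ∀ i ∈ Finset.Icc 1 n, ∑ j ∈ Finset.Icc 1 n, stFlow n w i j = w i :=
  suwa_todo_row_sums_general n w hw
end

section
/- The Suwa–Todo flow v_{ij} = max(0, min(Δ_{ij}, w_i + w_j − Δ_{ij}, w_i, w_j)) satisfies the total balance condition Σ_{i=1}^n v_{ij} = w_j for every j. -/
/-! Lay the weights end to end as the intervals `[P (i-1), P i]` of `[0, P n]`, where
`P i = w 1 + ⋯ + w i`, and let `a = S (j-1) - w 1` (for `j = 1` this uses `S 0 = S n`). Then `v i j`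
is the length of `[P (i-1), P i] ∩ [a, a + w j]`. Each such length is an increment of the clamp
`t ↦ min (a + w j) (max a t)`, and the window `[a, a + w j]` lies in `[0, P n]`, so the column sum
telescopes to `w j`. -/

open Finset

theorem min_sub_min_sub_eq_min_sub_max (a b x y : ℝ) :
    min (y - a) (min (b - x) (min (y - x) (b - a))) = min y b - max x a := by
  rw [← min_sub_sub_right, ← min_sub_sub_left, ← min_sub_sub_left]
  ac_rfl

theorem max_zero_min_sub_max_eq_clamp_sub {a b x y : ℝ} (hab : a ≤ b) (hxy : x ≤ y) :
    max 0 (min y b - max x a) = min b (max a y) - min b (max a x) := by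
  simp only [max_def, min_def]
  split_ifs <;> linarith

theorem Finset.sum_Icc_one_sub_pred {M : Type*} [AddCommGroup M] (f : ℕ → M) (n : ℕ) :
    ∑ i ∈ Icc 1 n, (f i - f (i - 1)) = f n - f 0 := by
  induction n with
  | zero => simp
  | succ n ih =>
    rw [sum_Icc_succ_top (by omega), ih, Nat.add_sub_cancel, sub_add_sub_cancel']

theorem sum_Icc_overlap_eq {P : ℕ → ℝ} {n : ℕ} {a b : ℝ} (hab : a ≤ b) (h0 : P 0 ≤ a)
    (hn : b ≤ P n) (hP : ∀ i ∈ Icc 1 n, P (i - 1) ≤ P i) :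
    ∑ i ∈ Icc 1 n, max 0 (min (P i) b - max (P (i - 1)) a) = b - a := by
  rw [sum_congr rfl fun i hi => max_zero_min_sub_max_eq_clamp_sub hab (hP i hi),
    sum_Icc_one_sub_pred (fun i => min b (max a (P i))), max_eq_right (hab.trans hn),
    min_eq_left hn, max_eq_left h0, min_eq_right hab]

theorem sum_Icc_one_pred_add (w : ℕ → ℝ) {i : ℕ} (hi : 1 ≤ i) :
    ∑ k ∈ Icc 1 (i - 1), w k + w i = ∑ k ∈ Icc 1 i, w k := by
  obtain ⟨i, rfl⟩ := Nat.exists_eq_add_of_le' hi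
  rw [Nat.add_sub_cancel, sum_Icc_succ_top (by omega)]

theorem sum_Icc_one_mono {n : ℕ} {w : ℕ → ℝ} (hw : ∀ k ∈ Icc 1 n, 0 ≤ w k) {i i' : ℕ}
    (hi : i ≤ i') (hi' : i' ≤ n) : ∑ k ∈ Icc 1 i, w k ≤ ∑ k ∈ Icc 1 i', w k :=
  sum_le_sum_of_subset_of_nonneg (Icc_subset_Icc_right hi) fun k hk _ =>
    hw k (Icc_subset_Icc_right hi' hk)

section SuwaTodo

variable {n : ℕ} {w : ℕ → ℝ}

theorem stS_of_ne_zero {i : ℕ} (hi : i ≠ 0) : stS n w i = ∑ k ∈ Icc 1 i, w k := if_neg hi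

theorem stFlow_eq_overlap {i : ℕ} (hi : 1 ≤ i) (j : ℕ) :
    stFlow n w i j = max 0 (min (∑ k ∈ Icc 1 i, w k) (stS n w (j - 1) - w 1 + w j)
      - max (∑ k ∈ Icc 1 (i - 1), w k) (stS n w (j - 1) - w 1)) := by
  rw [← min_sub_min_sub_eq_min_sub_max, stFlow, stDelta, stS_of_ne_zero (by omega),
    ← sum_Icc_one_pred_add w hi]
  ring_nf

theorem w_one_le_stS_pred (hw : ∀ k ∈ Icc 1 n, 0 ≤ w k) {j : ℕ} (hj : j ∈ Icc 1 n) :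
    w 1 ≤ stS n w (j - 1) := by
  obtain ⟨hj1, hjn⟩ := mem_Icc.mp hj
  have h1 : ∑ k ∈ Icc 1 1, w k = w 1 := by simp
  rcases eq_or_ne (j - 1) 0 with hj0 | hj0
  · rw [hj0, stS, if_pos rfl, ← h1]
    exact sum_Icc_one_mono hw (by omega) le_rfl
  · rw [stS_of_ne_zero hj0, ← h1]
    exact sum_Icc_one_mono hw (by omega) (by omega)

theorem stS_pred_add_le (hw : ∀ k ∈ Icc 1 n, 0 ≤ w k) {j : ℕ} (hj : j ∈ Icc 1 n) :
    stS n w (j - 1) + w j ≤ ∑ k ∈ Icc 1 n, w k + w 1 := by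
  obtain ⟨hj1, hjn⟩ := mem_Icc.mp hj
  rcases eq_or_ne (j - 1) 0 with hj0 | hj0
  · rw [hj0, stS, if_pos rfl, show j = 1 by omega]
  · rw [stS_of_ne_zero hj0, sum_Icc_one_pred_add w hj1]
    linarith [sum_Icc_one_mono hw hjn le_rfl, hw 1 (by simp; omega)]

end SuwaTodo

theorem suwa_todo_col_sums_general (n : ℕ) (w : ℕ → ℝ)
    (hw : ∀ k ∈ Finset.Icc 1 n, 0 < w k) :
    ∀ j ∈ Finset.Icc 1 n, ∑ i ∈ Finset.Icc 1 n, stFlow n w i j = w j := by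
  intro j hj
  have hw₀ : ∀ k ∈ Icc 1 n, 0 ≤ w k := fun k hk => (hw k hk).le
  have hlow := w_one_le_stS_pred hw₀ hj
  have hhigh := stS_pred_add_le hw₀ hj
  have hstep : ∀ i ∈ Icc 1 n, ∑ k ∈ Icc 1 (i - 1), w k ≤ ∑ k ∈ Icc 1 i, w k := fun i hi => by
    linarith [sum_Icc_one_pred_add w (mem_Icc.mp hi).1, hw i hi]
  rw [sum_congr rfl fun i hi => stFlow_eq_overlap (mem_Icc.mp hi).1 j,
    sum_Icc_overlap_eq (by linarith [hw j hj]) (by simpa using hlow) (by linarith) hstep]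
  ring

/-- The Suwa–Todo flow satisfies the total balance condition (column sums). -/
theorem suwa_todo_col_sums (n : ℕ) (hn : 2 ≤ n) (w : ℕ → ℝ)
    (hw : ∀ k ∈ Finset.Icc 1 n, 0 < w k)
    (hmax : ∀ k ∈ Finset.Icc 1 n, w k ≤ w 1) :
    ∀ j ∈ Finset.Icc 1 n, ∑ i ∈ Finset.Icc 1 n, stFlow n w i j = w j :=
  suwa_todo_col_sums_general n w hw
end

section
/- For the Suwa–Todo flow, the diagonal elements satisfy v_{11} = max(0, w_1 − Σ_{i=2}^n w_i) and v_{ii} = 0 for all i ≥ 2. -/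
open Finset

/-! On the diagonal `Δ 1 1 = w 1 - ∑_{k ≥ 2} w k ≤ w 1`, so the inner minimum is `Δ 1 1` itself,
while for `i ≥ 2` the telescoping `S i - S (i-1) = w i` gives `Δ i i = w i + w 1 ≥ 2 w i`, which makes
the term `2 w i - Δ i i` nonpositive. -/

section Diagonal

variable {n : ℕ} {w : ℕ → ℝ} {i : ℕ}

theorem stDelta_one_one (hn : 1 ≤ n) :
    stDelta n w 1 1 = w 1 - ∑ k ∈ Icc 2 n, w k := by
  have hS : ∑ k ∈ Icc 1 n, w k = w 1 + ∑ k ∈ Icc 2 n, w k := by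
    rw [← add_sum_Ioc_eq_sum_Icc hn, ← Icc_add_one_left_eq_Ioc]; rfl
  simp only [stDelta, stS, Nat.sub_self, if_true, one_ne_zero, if_false, Icc_self,
    sum_singleton, hS]
  ring

theorem stDelta_self_of_two_le (hi : 2 ≤ i) : stDelta n w i i = w i + w 1 := by
  obtain ⟨j, rfl⟩ : ∃ j, i = j + 1 := ⟨i - 1, by omega⟩
  simp only [stDelta, stS, Nat.add_sub_cancel, if_neg (by omega : j + 1 ≠ 0),
    if_neg (by omega : j ≠ 0), sum_Icc_succ_top (by omega : 1 ≤ j + 1)]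
  ring

theorem stFlow_self_of_stDelta_le (h : stDelta n w i i ≤ w i) :
    stFlow n w i i = max 0 (stDelta n w i i) := by
  rw [stFlow, min_self, min_eq_left (le_min (by linarith) h)]

theorem stFlow_self_eq_zero_of_two_mul_le (h : 2 * w i ≤ stDelta n w i i) :
    stFlow n w i i = 0 :=
  max_eq_left <| (min_le_right _ _).trans <| (min_le_left _ _).trans (by linarith)

end Diagonal

/-- The diagonal of the Suwa–Todo flow: `v 1 1 = max (0, w 1 - ∑_{i=2}^n w i)` and
`v i i = 0` for `2 ≤ i ≤ n`. -/
theorem suwa_todo_diagonal (n : ℕ) (hn : 2 ≤ n) (w : ℕ → ℝ)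
    (hw : ∀ k ∈ Finset.Icc 1 n, 0 < w k)
    (hmax : ∀ k ∈ Finset.Icc 1 n, w k ≤ w 1) :
    stFlow n w 1 1 = max 0 (w 1 - ∑ i ∈ Finset.Icc 2 n, w i) ∧
    ∀ i ∈ Finset.Icc 2 n, stFlow n w i i = 0 := by
  have hΔ := stDelta_one_one (w := w) (by omega : 1 ≤ n)
  have htail : 0 ≤ ∑ k ∈ Icc 2 n, w k :=
    sum_nonneg fun k hk ↦ (hw k (Icc_subset_Icc_left one_le_two hk)).le
  refine ⟨?_, fun i hi ↦ ?_⟩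
  · rw [stFlow_self_of_stDelta_le (by linarith), hΔ]
  · have hi' := mem_Icc.mp hi
    have hwi := hmax i (mem_Icc.mpr ⟨by omega, hi'.2⟩)
    exact stFlow_self_eq_zero_of_two_mul_le (by rw [stDelta_self_of_two_le hi'.1]; linarith)
end

section
/- If w_1 > (1/2) Σ_{k=1}^n w_k, then any stochastic flow (v_{ij}) with nonnegative entries satisfying row sums Σ_j v_{ij} = w_i and column sums Σ_i v_{ij} = w_j must have v_{11} ≥ w_1 − Σ_{i=2}^n w_i > 0; hence the Suwa–Todo flow minimizes the total rejection Σ_i v_{ii} among all such flows. -/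
/-! Row 1 of the flow carries mass `w 1`, but each off-diagonal entry `v 1 j` is bounded by its
column sum `w j`; what does not fit off the diagonal must sit at `v 1 1`. -/

open Finset

section StochasticFlow

variable {ι : Type*} {s : Finset ι} {v : ι → ι → ℝ} {w : ι → ℝ} {a i j : ι}

theorem entry_le_of_sum_col_eq (hpos : ∀ i ∈ s, 0 ≤ v i j) (hcol : ∑ i ∈ s, v i j = w j)
    (hi : i ∈ s) : v i j ≤ w j :=
  hcol ▸ single_le_sum (f := fun i => v i j) hpos hi

theorem sub_sum_erase_le_diag [DecidableEq ι] (ha : a ∈ s) (hpos : ∀ i ∈ s, ∀ j ∈ s, 0 ≤ v i j)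
    (hrow : ∑ j ∈ s, v a j = w a) (hcol : ∀ j ∈ s, ∑ i ∈ s, v i j = w j) :
    w a - ∑ j ∈ s.erase a, w j ≤ v a a := by
  have hoff : ∑ j ∈ s.erase a, v a j ≤ ∑ j ∈ s.erase a, w j :=
    sum_le_sum fun j hj =>
      have hj := mem_of_mem_erase hj
      entry_le_of_sum_col_eq (fun i hi => hpos i hi j hj) (hcol j hj) ha
  rw [← add_sum_erase s _ ha] at hrow
  linarith

theorem sub_sum_erase_pos [DecidableEq ι] (ha : a ∈ s) (h : (∑ k ∈ s, w k) / 2 < w a) :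
    0 < w a - ∑ j ∈ s.erase a, w j := by
  rw [← add_sum_erase s w ha] at h
  linarith

theorem max_zero_le_sum_diag (ha : a ∈ s) (hpos : ∀ i ∈ s, ∀ j ∈ s, 0 ≤ v i j)
    {c : ℝ} (hc : c ≤ v a a) : max 0 c ≤ ∑ i ∈ s, v i i :=
  max_le (sum_nonneg fun i hi => hpos i hi i hi)
    (hc.trans (single_le_sum (f := fun i => v i i) (fun i hi => hpos i hi i hi) ha))

end StochasticFlow

theorem rejection_lower_bound_general (n : ℕ) (hn : 2 ≤ n) (w : ℕ → ℝ)
    (h : (∑ k ∈ Finset.Icc 1 n, w k) / 2 < w 1)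
    (v : ℕ → ℕ → ℝ)
    (hpos : ∀ i ∈ Finset.Icc 1 n, ∀ j ∈ Finset.Icc 1 n, 0 ≤ v i j)
    (hrow : ∀ i ∈ Finset.Icc 1 n, ∑ j ∈ Finset.Icc 1 n, v i j = w i)
    (hcol : ∀ j ∈ Finset.Icc 1 n, ∑ i ∈ Finset.Icc 1 n, v i j = w j) :
    (w 1 - ∑ i ∈ Finset.Icc 2 n, w i ≤ v 1 1) ∧
    (0 < w 1 - ∑ i ∈ Finset.Icc 2 n, w i) ∧
    (max 0 (w 1 - ∑ i ∈ Finset.Icc 2 n, w i) ≤ ∑ i ∈ Finset.Icc 1 n, v i i) := by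
  have h1 : 1 ∈ Icc 1 n := mem_Icc.2 ⟨le_rfl, by omega⟩
  have herase : Icc 2 n = (Icc 1 n).erase 1 := by
    ext k
    simp only [mem_Icc, mem_erase]
    omega
  have hdiag := sub_sum_erase_le_diag h1 hpos (hrow 1 h1) hcol
  rw [herase]
  exact ⟨hdiag, sub_sum_erase_pos h1 h, max_zero_le_sum_diag h1 hpos hdiag⟩

/-- If `w 1 > (∑ w k) / 2`, then any stochastic flow (nonnegative, with row sums
`w i` and column sums `w j`) has `v 1 1 ≥ w 1 - ∑_{i=2}^n w i > 0`; in particular the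
total rejection `∑ v i i` is at least `max (0, w 1 - ∑_{i≥2} w i)`, the value achieved
by the Suwa–Todo flow. -/
theorem rejection_lower_bound (n : ℕ) (hn : 2 ≤ n) (w : ℕ → ℝ)
    (hw : ∀ k ∈ Finset.Icc 1 n, 0 < w k)
    (hmax : ∀ k ∈ Finset.Icc 1 n, w k ≤ w 1)
    (h : (∑ k ∈ Finset.Icc 1 n, w k) / 2 < w 1)
    (v : ℕ → ℕ → ℝ)
    (hpos : ∀ i ∈ Finset.Icc 1 n, ∀ j ∈ Finset.Icc 1 n, 0 ≤ v i j)
    (hrow : ∀ i ∈ Finset.Icc 1 n, ∑ j ∈ Finset.Icc 1 n, v i j = w i)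
    (hcol : ∀ j ∈ Finset.Icc 1 n, ∑ i ∈ Finset.Icc 1 n, v i j = w j) :
    (w 1 - ∑ i ∈ Finset.Icc 2 n, w i ≤ v 1 1) ∧
    (0 < w 1 - ∑ i ∈ Finset.Icc 2 n, w i) ∧
    (max 0 (w 1 - ∑ i ∈ Finset.Icc 2 n, w i) ≤ ∑ i ∈ Finset.Icc 1 n, v i i) :=
  rejection_lower_bound_general n hn w h v hpos hrow hcol
end

section
/- Let P be a stochastic matrix on a finite state space S. If there exist a state c and two cycles through c of coprime lengths p and q (i.e., (P^p)_{cc} > 0 and (P^q)_{cc} > 0 with gcd(p,q) = 1), and P is irreducible, then P is primitive: there exists N such that (P^k)_{ab} > 0 for all states a, b and all k ≥ N. -/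
/-!
The lengths of closed walks through `c` form an additive submonoid of `ℕ`; containing the coprime
`p` and `q`, it contains every `k ≥ (p - 1) (q - 1)` (the two-coin problem). By irreducibility
every `a` reaches `c` and `c` reaches every `b`; padding such a walk `a → c → b` with a loop at `c`
of suitable length yields a walk from `a` to `b` of every sufficiently large length.
-/

namespace Matrix

variable {n R : Type*} [Fintype n] [DecidableEq n] [Semiring R] [PartialOrder R]
  [IsStrictOrderedRing R] {A : Matrix n n R}

theorem pow_apply_pos_add (hA : ∀ i j, 0 ≤ A i j) {k l : ℕ} {i j m : n}
    (h₁ : 0 < (A ^ k) i m) (h₂ : 0 < (A ^ l) m j) : 0 < (A ^ (k + l)) i j := by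
  rw [pow_add, mul_apply]
  exact (mul_pos h₁ h₂).trans_le <| Finset.single_le_sum
    (fun x _ ↦ mul_nonneg (pow_apply_nonneg hA k i x) (pow_apply_nonneg hA l x j))
    (Finset.mem_univ m)

def returnTimes (hA : ∀ i j, 0 ≤ A i j) (i : n) : AddSubmonoid ℕ where
  carrier := {k | 0 < (A ^ k) i i}
  zero_mem' := by simp
  add_mem' := pow_apply_pos_add hA

theorem pow_apply_self_pos_of_coprime (hA : ∀ i j, 0 ≤ A i j) {i : n} {p q k : ℕ}
    (hcop : p.Coprime q) (hp : 0 < (A ^ p) i i) (hq : 0 < (A ^ q) i i)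
    (hk : p.pred * q.pred ≤ k) : 0 < (A ^ k) i i := by
  obtain ⟨a, b, rfl⟩ :=
    Nat.exists_add_mul_eq_of_gcd_dvd_of_mul_pred_le p q k (by simp [hcop.gcd_eq_one]) hk
  exact add_mem (nsmul_mem (S := returnTimes hA i) hp a) (nsmul_mem (S := returnTimes hA i) hq b)

theorem exists_forall_pow_apply_pos_of_forall_pow_apply_self_pos (hA : ∀ i j, 0 ≤ A i j)
    (hirr : ∀ i j, ∃ k, 0 < (A ^ k) i j) {c : n} {N : ℕ}
    (hc : ∀ k, N ≤ k → 0 < (A ^ k) c c) :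
    ∃ M, ∀ i j k, M ≤ k → 0 < (A ^ k) i j := by
  choose f hf using fun i ↦ hirr i c
  choose g hg using fun j ↦ hirr c j
  refine ⟨Finset.univ.sup f + N + Finset.univ.sup g, fun i j k hk ↦ ?_⟩
  have hfi : f i ≤ Finset.univ.sup f := Finset.le_sup (Finset.mem_univ i)
  have hgj : g j ≤ Finset.univ.sup g := Finset.le_sup (Finset.mem_univ j)
  have hloop : 0 < (A ^ (k - f i - g j)) c c := hc _ (by omega)
  have hsplit : f i + (k - f i - g j) + g j = k := by omega
  rw [← hsplit]
  exact pow_apply_pos_add hA (pow_apply_pos_add hA (hf i) hloop) (hg j)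

end Matrix

theorem irreducible_coprime_cycles_primitive_general {S : Type*} [Fintype S] [DecidableEq S]
    (P : Matrix S S ℝ)
    (hpos : ∀ a b, 0 ≤ P a b)
    (hirr : ∀ a b : S, ∃ m : ℕ, 0 < (P ^ m) a b)
    (c : S) (p q : ℕ) (hcop : Nat.Coprime p q)
    (hcycp : 0 < (P ^ p) c c) (hcycq : 0 < (P ^ q) c c) :
    ∃ N : ℕ, ∀ a b : S, ∀ k : ℕ, N ≤ k → 0 < (P ^ k) a b :=
  Matrix.exists_forall_pow_apply_pos_of_forall_pow_apply_self_pos hpos hirr fun _ ↦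
    Matrix.pow_apply_self_pos_of_coprime hpos hcop hcycp hcycq

/-- An irreducible stochastic matrix admitting two cycles of coprime lengths through a
common state is primitive (ergodic). -/
theorem irreducible_coprime_cycles_primitive {S : Type*} [Fintype S] [DecidableEq S]
    [Nonempty S] (P : Matrix S S ℝ)
    (hpos : ∀ a b, 0 ≤ P a b) (hrow : ∀ a, ∑ b, P a b = 1)
    (hirr : ∀ a b : S, ∃ m : ℕ, 0 < (P ^ m) a b)
    (c : S) (p q : ℕ) (hp : 0 < p) (hq : 0 < q) (hcop : Nat.Coprime p q)
    (hcycp : 0 < (P ^ p) c c) (hcycq : 0 < (P ^ q) c c) :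
    ∃ N : ℕ, ∀ a b : S, ∀ k : ℕ, N ≤ k → 0 < (P ^ k) a b :=
  irreducible_coprime_cycles_primitive_general P hpos hirr c p q hcop hcycp hcycq
end

section
/- Let π be a probability distribution on a finite set with all π_i > 0. The Metropolized Gibbs transition probabilities p_{ij} = min(π_j/(1 − π_i), π_j/(1 − π_j)) for i ≠ j, with p_{ii} = 1 − Σ_{j≠i} p_{ij}, define a valid stochastic matrix (all entries nonnegative, rows summing to 1) that is reversible with respect to π: π_i p_{ij} = π_j p_{ji} for all i ≠ j. -/
/-!
Off the diagonal, `π i * p i j = min (π i * π j / (1 - π i)) (π i * π j / (1 - π j))` is symmetric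
in `i` and `j`, which is detailed balance. The diagonal entry is nonnegative because
`p i j ≤ π j / (1 - π i)`, and these bounds sum over `j ≠ i` to exactly `1`.
-/

open Finset

/-- The Metropolized Gibbs sampler transition matrix for a probability vector `π`. -/
noncomputable def metroGibbs (n : ℕ) (π : ℕ → ℝ) (i j : ℕ) : ℝ :=
  if i = j then 1 - ∑ k ∈ (Finset.Icc 1 n).erase i, min (π k / (1 - π i)) (π k / (1 - π k))
  else min (π j / (1 - π i)) (π j / (1 - π j))

theorem sum_erase_div_one_sub_eq_one {ι : Type*} [DecidableEq ι] {s : Finset ι} {w : ι → ℝ}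
    {i : ι} (hw : ∑ k ∈ s, w k = 1) (hi : i ∈ s) (hwi : w i ≠ 1) :
    ∑ k ∈ s.erase i, w k / (1 - w i) = 1 := by
  have hrest : ∑ k ∈ s.erase i, w k = 1 - w i := by
    rw [← hw, ← add_sum_erase s w hi, add_sub_cancel_left]
  rw [← sum_div, hrest, div_self (sub_ne_zero.mpr hwi.symm)]

namespace metroGibbs

variable {n : ℕ} {π : ℕ → ℝ} {i j : ℕ}

theorem of_ne (hij : i ≠ j) :
    metroGibbs n π i j = min (π j / (1 - π i)) (π j / (1 - π j)) :=
  if_neg hij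

theorem self_eq :
    metroGibbs n π i i = 1 - ∑ k ∈ (Icc 1 n).erase i, min (π k / (1 - π i)) (π k / (1 - π k)) :=
  if_pos rfl

theorem sum_eq_one (hi : i ∈ Icc 1 n) : ∑ j ∈ Icc 1 n, metroGibbs n π i j = 1 := by
  rw [← add_sum_erase _ _ hi, sum_congr rfl fun j hj => of_ne (ne_of_mem_erase hj).symm, self_eq,
    sub_add_cancel]

theorem self_nonneg (hsum : ∑ k ∈ Icc 1 n, π k = 1) (hi : i ∈ Icc 1 n) (hπi : π i < 1) :
    0 ≤ metroGibbs n π i i := by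
  have hle : ∑ k ∈ (Icc 1 n).erase i, min (π k / (1 - π i)) (π k / (1 - π k)) ≤ 1 :=
    calc _ ≤ ∑ k ∈ (Icc 1 n).erase i, π k / (1 - π i) := sum_le_sum fun _ _ => min_le_left _ _
      _ = 1 := sum_erase_div_one_sub_eq_one hsum hi hπi.ne
  rwa [self_eq, sub_nonneg]

theorem nonneg_of_ne (hπj : 0 ≤ π j) (hπi₁ : π i ≤ 1) (hπj₁ : π j ≤ 1) (hij : i ≠ j) :
    0 ≤ metroGibbs n π i j := by
  rw [of_ne hij]
  exact le_min (div_nonneg hπj (sub_nonneg.mpr hπi₁)) (div_nonneg hπj (sub_nonneg.mpr hπj₁))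

theorem nonneg (hπ : ∀ k ∈ Icc 1 n, 0 ≤ π k ∧ π k < 1) (hsum : ∑ k ∈ Icc 1 n, π k = 1)
    (hi : i ∈ Icc 1 n) (hj : j ∈ Icc 1 n) : 0 ≤ metroGibbs n π i j := by
  rcases eq_or_ne i j with rfl | hij
  · exact self_nonneg hsum hi (hπ i hi).2
  · exact nonneg_of_ne (hπ j hj).1 (hπ i hi).2.le (hπ j hj).2.le hij

theorem detailed_balance (hπi : 0 ≤ π i) (hπj : 0 ≤ π j) (hij : i ≠ j) :
    π i * metroGibbs n π i j = π j * metroGibbs n π j i := by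
  rw [of_ne hij, of_ne hij.symm, mul_min_of_nonneg _ _ hπi, mul_min_of_nonneg _ _ hπj, min_comm]
  ring_nf

end metroGibbs

theorem metropolized_gibbs_valid_general (n : ℕ) (π : ℕ → ℝ)
    (hπ : ∀ k ∈ Finset.Icc 1 n, 0 < π k ∧ π k < 1)
    (hsum : ∑ k ∈ Finset.Icc 1 n, π k = 1) :
    (∀ i ∈ Finset.Icc 1 n, ∀ j ∈ Finset.Icc 1 n, 0 ≤ metroGibbs n π i j) ∧
    (∀ i ∈ Finset.Icc 1 n, ∑ j ∈ Finset.Icc 1 n, metroGibbs n π i j = 1) ∧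
    (∀ i ∈ Finset.Icc 1 n, ∀ j ∈ Finset.Icc 1 n, i ≠ j →
      π i * metroGibbs n π i j = π j * metroGibbs n π j i) := by
  have hπ' : ∀ k ∈ Icc 1 n, 0 ≤ π k ∧ π k < 1 := fun k hk => ⟨(hπ k hk).1.le, (hπ k hk).2⟩
  exact ⟨fun i hi j hj => metroGibbs.nonneg hπ' hsum hi hj,
    fun i hi => metroGibbs.sum_eq_one hi,
    fun i hi j hj hij => metroGibbs.detailed_balance (hπ' i hi).1 (hπ' j hj).1 hij⟩

/-- The Metropolized Gibbs sampler is a valid stochastic matrix, reversible with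
respect to `π`. -/
theorem metropolized_gibbs_valid (n : ℕ) (hn : 2 ≤ n) (π : ℕ → ℝ)
    (hπ : ∀ k ∈ Finset.Icc 1 n, 0 < π k ∧ π k < 1)
    (hsum : ∑ k ∈ Finset.Icc 1 n, π k = 1) :
    (∀ i ∈ Finset.Icc 1 n, ∀ j ∈ Finset.Icc 1 n, 0 ≤ metroGibbs n π i j) ∧
    (∀ i ∈ Finset.Icc 1 n, ∑ j ∈ Finset.Icc 1 n, metroGibbs n π i j = 1) ∧
    (∀ i ∈ Finset.Icc 1 n, ∀ j ∈ Finset.Icc 1 n, i ≠ j →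
      π i * metroGibbs n π i j = π j * metroGibbs n π j i) :=
  metropolized_gibbs_valid_general n π hπ hsum
end
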